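/- arXiv:1212.3931 — 4 statements merged into one kernel-verified Lean document; each statement's English description precedes it below -/
import Mathlib

section
/- Suppose S ∘ S = I_Z, and suppose there exists a constant c ≥ 1 such that every u = (u_⊥, u_∥) ∈ Z satisfying Su = u or Su = −u obeys c⁻¹‖u_⊥‖ ≤ ‖u_∥‖ ≤ c‖u_⊥‖. Then there exists C > 0, depending only on c and ‖S‖, such that: for all φ ∈ X₂ one has ‖φ‖ ≤ C‖s₁₂φ‖, ‖φ‖ ≤ C‖(I + s₂₂)φ‖ and ‖φ‖ ≤ C‖(I − s₂₂)φ‖; and for all φ ∈ X₁ one has ‖φ‖ ≤ C‖s₂₁φ‖, ‖φ‖ ≤ C‖(I + s₁₁)φ‖ and ‖φ‖ ≤ C‖(I − s₁₁)φ‖. In particular each of the six operators s₁₂, s₂₁, I ± s₁₁, I ± s₂₂ is injective with closed range. -/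
open ContinuousLinearMap in
lemma aux_inj_closed {X Y : Type*} [NormedAddCommGroup X] [NormedSpace ℂ X]
    [CompleteSpace X] [NormedAddCommGroup Y] [NormedSpace ℂ Y]
    (T : X →L[ℂ] Y) (C : ℝ) (hC : 0 < C) (h : ∀ φ, ‖φ‖ ≤ C * ‖T φ‖) :
    Function.Injective T ∧ IsClosed (Set.range T) := by
  have ha : AntilipschitzWith (⟨C, hC.le⟩ : NNReal) T :=
    T.antilipschitz_of_bound h
  exact ⟨ha.injective, ha.isClosed_range T.uniformContinuous⟩

theorem stmt0
    {X₁ X₂ : Type*} [NormedAddCommGroup X₁] [NormedSpace ℂ X₁] [CompleteSpace X₁]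
    [NormedAddCommGroup X₂] [NormedSpace ℂ X₂] [CompleteSpace X₂]
    (S : (X₁ × X₂) →L[ℂ] (X₁ × X₂))
    (s₁₁ : X₁ →L[ℂ] X₁) (s₁₂ : X₂ →L[ℂ] X₁)
    (s₂₁ : X₁ →L[ℂ] X₂) (s₂₂ : X₂ →L[ℂ] X₂)
    (hblock : ∀ (x : X₁) (y : X₂), S (x, y) = (s₁₁ x + s₁₂ y, s₂₁ x + s₂₂ y))
    (hS2 : S.comp S = ContinuousLinearMap.id ℂ (X₁ × X₂))
    (c : ℝ) (hc : 1 ≤ c)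
    (hspec : ∀ u : X₁ × X₂, (S u = u ∨ S u = -u) →
      c⁻¹ * ‖u.1‖ ≤ ‖u.2‖ ∧ ‖u.2‖ ≤ c * ‖u.1‖) :
    (∃ C : ℝ, 0 < C ∧
      (∀ φ : X₂, ‖φ‖ ≤ C * ‖s₁₂ φ‖ ∧
        ‖φ‖ ≤ C * ‖φ + s₂₂ φ‖ ∧ ‖φ‖ ≤ C * ‖φ - s₂₂ φ‖) ∧
      (∀ φ : X₁, ‖φ‖ ≤ C * ‖s₂₁ φ‖ ∧
        ‖φ‖ ≤ C * ‖φ + s₁₁ φ‖ ∧ ‖φ‖ ≤ C * ‖φ - s₁₁ φ‖)) ∧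
    (Function.Injective s₁₂ ∧ IsClosed (Set.range s₁₂)) ∧
    (Function.Injective s₂₁ ∧ IsClosed (Set.range s₂₁)) ∧
    (Function.Injective (fun φ : X₁ => φ + s₁₁ φ) ∧
      IsClosed (Set.range (fun φ : X₁ => φ + s₁₁ φ))) ∧
    (Function.Injective (fun φ : X₁ => φ - s₁₁ φ) ∧
      IsClosed (Set.range (fun φ : X₁ => φ - s₁₁ φ))) ∧
    (Function.Injective (fun φ : X₂ => φ + s₂₂ φ) ∧
      IsClosed (Set.range (fun φ : X₂ => φ + s₂₂ φ))) ∧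
    (Function.Injective (fun φ : X₂ => φ - s₂₂ φ) ∧
      IsClosed (Set.range (fun φ : X₂ => φ - s₂₂ φ))) := by
  have hc0 : (0:ℝ) < c := lt_of_lt_of_le one_pos hc
  have hci : c * c⁻¹ = 1 := mul_inv_cancel₀ hc0.ne'
  have hSS : ∀ u : X₁ × X₂, S (S u) = u := by
    intro u
    have := DFunLike.congr_fun hS2 u
    simpa using this
  -- bounds for φ : X₂
  have key2 : ∀ φ : X₂, ‖φ‖ ≤ c ^ 2 * ‖s₁₂ φ‖ ∧
      ‖φ‖ ≤ c ^ 2 * ‖φ + s₂₂ φ‖ ∧ ‖φ‖ ≤ c ^ 2 * ‖φ - s₂₂ φ‖ := by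
    intro φ
    have h0 : S (0, φ) = (s₁₂ φ, s₂₂ φ) := by simpa using hblock 0 φ
    have hv : S (s₁₂ φ, φ + s₂₂ φ) = (s₁₂ φ, φ + s₂₂ φ) := by
      have e : ((s₁₂ φ, φ + s₂₂ φ) : X₁ × X₂) = (0, φ) + S (0, φ) := by
        rw [h0]; simp [Prod.ext_iff]
      rw [e, map_add, hSS, h0]
      simp [Prod.ext_iff, add_comm]
    have hw : S (-(s₁₂ φ), φ - s₂₂ φ) = -(-(s₁₂ φ), φ - s₂₂ φ) := by
      have e : ((-(s₁₂ φ), φ - s₂₂ φ) : X₁ × X₂) = (0, φ) - S (0, φ) := by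
        rw [h0]; simp [Prod.ext_iff]
      rw [e, map_sub, hSS, h0]
      simp [Prod.ext_iff]
    have hp := hspec _ (Or.inl hv)
    have hm := hspec _ (Or.inr hw)
    simp only at hp hm
    rw [norm_neg] at hm
    obtain ⟨hp1, hp2⟩ := hp
    obtain ⟨hm1, hm2⟩ := hm
    have hsum : 2 * ‖φ‖ ≤ ‖φ + s₂₂ φ‖ + ‖φ - s₂₂ φ‖ := by
      have h1 : ‖(φ + s₂₂ φ) + (φ - s₂₂ φ)‖ ≤ ‖φ + s₂₂ φ‖ + ‖φ - s₂₂ φ‖ :=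
        norm_add_le _ _
      have h2 : (φ + s₂₂ φ) + (φ - s₂₂ φ) = (2:ℝ) • φ := by
        rw [two_smul]; abel
      rw [h2, norm_smul] at h1
      simpa using h1
    have hbase : ‖φ‖ ≤ c * ‖s₁₂ φ‖ := by nlinarith
    have hq1 : ‖s₁₂ φ‖ ≤ c * ‖φ + s₂₂ φ‖ := by
      have h' := mul_le_mul_of_nonneg_left hp1 hc0.le
      rwa [← mul_assoc, hci, one_mul] at h'
    have hq2 : ‖s₁₂ φ‖ ≤ c * ‖φ - s₂₂ φ‖ := by
      have h' := mul_le_mul_of_nonneg_left hm1 hc0.le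
      rwa [← mul_assoc, hci, one_mul] at h'
    refine ⟨?_, ?_, ?_⟩
    · calc ‖φ‖ ≤ c * ‖s₁₂ φ‖ := hbase
        _ ≤ c ^ 2 * ‖s₁₂ φ‖ := by
          nlinarith [norm_nonneg (s₁₂ φ)]
    · calc ‖φ‖ ≤ c * ‖s₁₂ φ‖ := hbase
        _ ≤ c * (c * ‖φ + s₂₂ φ‖) := mul_le_mul_of_nonneg_left hq1 hc0.le
        _ = c ^ 2 * ‖φ + s₂₂ φ‖ := by ring
    · calc ‖φ‖ ≤ c * ‖s₁₂ φ‖ := hbase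
        _ ≤ c * (c * ‖φ - s₂₂ φ‖) := mul_le_mul_of_nonneg_left hq2 hc0.le
        _ = c ^ 2 * ‖φ - s₂₂ φ‖ := by ring
  -- bounds for φ : X₁
  have key1 : ∀ φ : X₁, ‖φ‖ ≤ c ^ 2 * ‖s₂₁ φ‖ ∧
      ‖φ‖ ≤ c ^ 2 * ‖φ + s₁₁ φ‖ ∧ ‖φ‖ ≤ c ^ 2 * ‖φ - s₁₁ φ‖ := by
    intro φ
    have h0 : S (φ, 0) = (s₁₁ φ, s₂₁ φ) := by simpa using hblock φ 0
    have hv : S (φ + s₁₁ φ, s₂₁ φ) = (φ + s₁₁ φ, s₂₁ φ) := by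
      have e : ((φ + s₁₁ φ, s₂₁ φ) : X₁ × X₂) = (φ, 0) + S (φ, 0) := by
        rw [h0]; simp [Prod.ext_iff]
      rw [e, map_add, hSS, h0]
      simp [Prod.ext_iff, add_comm]
    have hw : S (φ - s₁₁ φ, -(s₂₁ φ)) = -(φ - s₁₁ φ, -(s₂₁ φ)) := by
      have e : ((φ - s₁₁ φ, -(s₂₁ φ)) : X₁ × X₂) = (φ, 0) - S (φ, 0) := by
        rw [h0]; simp [Prod.ext_iff]
      rw [e, map_sub, hSS, h0]
      simp [Prod.ext_iff]
    have hp := hspec _ (Or.inl hv)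
    have hm := hspec _ (Or.inr hw)
    simp only at hp hm
    rw [norm_neg] at hm
    obtain ⟨hp1, hp2⟩ := hp
    obtain ⟨hm1, hm2⟩ := hm
    have hsum : 2 * ‖φ‖ ≤ ‖φ + s₁₁ φ‖ + ‖φ - s₁₁ φ‖ := by
      have h1 : ‖(φ + s₁₁ φ) + (φ - s₁₁ φ)‖ ≤ ‖φ + s₁₁ φ‖ + ‖φ - s₁₁ φ‖ :=
        norm_add_le _ _
      have h2 : (φ + s₁₁ φ) + (φ - s₁₁ φ) = (2:ℝ) • φ := by
        rw [two_smul]; abel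
      rw [h2, norm_smul] at h1
      simpa using h1
    -- hp1 : c⁻¹ * ‖φ + s₁₁ φ‖ ≤ ‖s₂₁ φ‖, hp2 : ‖s₂₁ φ‖ ≤ c * ‖φ + s₁₁ φ‖
    have hplus : ‖φ + s₁₁ φ‖ ≤ c * ‖s₂₁ φ‖ := by
      have h' := mul_le_mul_of_nonneg_left hp1 hc0.le
      rwa [← mul_assoc, hci, one_mul] at h'
    have hminus : ‖φ - s₁₁ φ‖ ≤ c * ‖s₂₁ φ‖ := by
      have h' := mul_le_mul_of_nonneg_left hm1 hc0.le
      rwa [← mul_assoc, hci, one_mul] at h'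
    have hbase : ‖φ‖ ≤ c * ‖s₂₁ φ‖ := by nlinarith
    refine ⟨?_, ?_, ?_⟩
    · calc ‖φ‖ ≤ c * ‖s₂₁ φ‖ := hbase
        _ ≤ c ^ 2 * ‖s₂₁ φ‖ := by
          nlinarith [norm_nonneg (s₂₁ φ)]
    · calc ‖φ‖ ≤ c * ‖s₂₁ φ‖ := hbase
        _ ≤ c * (c * ‖φ + s₁₁ φ‖) := mul_le_mul_of_nonneg_left hp2 hc0.le
        _ = c ^ 2 * ‖φ + s₁₁ φ‖ := by ring
    · calc ‖φ‖ ≤ c * ‖s₂₁ φ‖ := hbase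
        _ ≤ c * (c * ‖φ - s₁₁ φ‖) := mul_le_mul_of_nonneg_left hm2 hc0.le
        _ = c ^ 2 * ‖φ - s₁₁ φ‖ := by ring
  have hC : (0:ℝ) < c ^ 2 := by positivity
  refine ⟨⟨c ^ 2, hC, key2, key1⟩, ?_, ?_, ?_, ?_, ?_, ?_⟩
  · exact aux_inj_closed s₁₂ _ hC fun φ => (key2 φ).1
  · exact aux_inj_closed s₂₁ _ hC fun φ => (key1 φ).1
  · have hfun : (fun φ : X₁ => φ + s₁₁ φ) = ⇑(ContinuousLinearMap.id ℂ X₁ + s₁₁) := by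
      ext φ; simp
    rw [hfun]
    exact aux_inj_closed _ _ hC fun φ => by simpa using (key1 φ).2.1
  · have hfun : (fun φ : X₁ => φ - s₁₁ φ) = ⇑(ContinuousLinearMap.id ℂ X₁ - s₁₁) := by
      ext φ; simp
    rw [hfun]
    exact aux_inj_closed _ _ hC fun φ => by simpa using (key1 φ).2.2
  · have hfun : (fun φ : X₂ => φ + s₂₂ φ) = ⇑(ContinuousLinearMap.id ℂ X₂ + s₂₂) := by
      ext φ; simp
    rw [hfun]
    exact aux_inj_closed _ _ hC fun φ => by simpa using (key2 φ).2.1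
  · have hfun : (fun φ : X₂ => φ - s₂₂ φ) = ⇑(ContinuousLinearMap.id ℂ X₂ - s₂₂) := by
      ext φ; simp
    rw [hfun]
    exact aux_inj_closed _ _ hC fun φ => by simpa using (key2 φ).2.2
end

section
/- Suppose S ∘ S = I_Z, and suppose there exists a constant c ≥ 1 such that every u = (u_⊥, u_∥) ∈ Z satisfying Su = u or Su = −u obeys c⁻¹‖u_⊥‖ ≤ ‖u_∥‖ ≤ c‖u_⊥‖. Let P⁺ = ½(I + S), P⁻ = ½(I − S), and let Q₊(x, y) = (x, 0), Q₋(x, y) = (0, y). Then: (i) for all u ∈ Z and both choices of sign, ‖P^±u‖ ≤ c‖Q₊P^±u‖ and ‖P^±u‖ ≤ c‖Q₋P^±u‖; and (ii) there exists C > 0, depending only on c and ‖S‖, such that for all u ∈ Z and both choices of sign, ‖Q₊u‖ ≤ C‖P^±Q₊u‖ and ‖Q₋u‖ ≤ C‖P^±Q₋u‖. -/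
/- STATEMENT 2: with `S² = I` and the spectral condition, setting
`P⁺ = ½(I + S)`, `P⁻ = ½(I - S)`, `Q₊(x,y) = (x,0)`, `Q₋(x,y) = (0,y)`,
one has `‖P^±u‖ ≤ c‖Q₊P^±u‖`, `‖P^±u‖ ≤ c‖Q₋P^±u‖`, and there is `C > 0`
with `‖Q₊u‖ ≤ C‖P^±Q₊u‖` and `‖Q₋u‖ ≤ C‖P^±Q₋u‖`.
The product `X₁ × X₂` carries the max norm (Mathlib's default). -/
theorem stmt2
    {X₁ X₂ : Type*} [NormedAddCommGroup X₁] [NormedSpace ℂ X₁] [CompleteSpace X₁]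
    [NormedAddCommGroup X₂] [NormedSpace ℂ X₂] [CompleteSpace X₂]
    (S : (X₁ × X₂) →L[ℂ] (X₁ × X₂))
    (hS2 : S.comp S = ContinuousLinearMap.id ℂ (X₁ × X₂))
    (c : ℝ) (hc : 1 ≤ c)
    (hspec : ∀ u : X₁ × X₂, (S u = u ∨ S u = -u) →
      c⁻¹ * ‖u.1‖ ≤ ‖u.2‖ ∧ ‖u.2‖ ≤ c * ‖u.1‖)
    (Pp Pm Qp Qm : (X₁ × X₂) →L[ℂ] (X₁ × X₂))
    (hPp : ∀ u, Pp u = ((2 : ℂ)⁻¹) • (u + S u))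
    (hPm : ∀ u, Pm u = ((2 : ℂ)⁻¹) • (u - S u))
    (hQp : ∀ u : X₁ × X₂, Qp u = (u.1, 0))
    (hQm : ∀ u : X₁ × X₂, Qm u = (0, u.2)) :
    (∀ u : X₁ × X₂,
      ‖Pp u‖ ≤ c * ‖Qp (Pp u)‖ ∧ ‖Pp u‖ ≤ c * ‖Qm (Pp u)‖ ∧
      ‖Pm u‖ ≤ c * ‖Qp (Pm u)‖ ∧ ‖Pm u‖ ≤ c * ‖Qm (Pm u)‖) ∧
    (∃ C : ℝ, 0 < C ∧ ∀ u : X₁ × X₂,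
      ‖Qp u‖ ≤ C * ‖Pp (Qp u)‖ ∧ ‖Qp u‖ ≤ C * ‖Pm (Qp u)‖ ∧
      ‖Qm u‖ ≤ C * ‖Pp (Qm u)‖ ∧ ‖Qm u‖ ≤ C * ‖Pm (Qm u)‖) := by
  have hc0 : (0:ℝ) < c := lt_of_lt_of_le one_pos hc
  have hSS : ∀ u : X₁ × X₂, S (S u) = u := fun u => DFunLike.congr_fun hS2 u
  have hSPp : ∀ u, S (Pp u) = Pp u := by
    intro u
    rw [hPp, map_smul, map_add, hSS, add_comm]
  have hSPm : ∀ u, S (Pm u) = -(Pm u) := by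
    intro u
    rw [hPm, map_smul, map_sub, hSS]
    module
  have hsum : ∀ u, Pp u + Pm u = u := by
    intro u
    rw [hPp, hPm]
    module
  -- key estimate for eigenvectors
  have key : ∀ v : X₁ × X₂, (S v = v ∨ S v = -v) →
      ‖v‖ ≤ c * ‖v.1‖ ∧ ‖v‖ ≤ c * ‖v.2‖ := by
    intro v hv
    obtain ⟨h1, h2⟩ := hspec v hv
    have h3 : ‖v.1‖ ≤ c * ‖v.2‖ := by
      rwa [inv_mul_le_iff₀ hc0] at h1
    refine ⟨?_, ?_⟩ <;> rw [Prod.norm_def] <;> apply max_le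
    · nlinarith [norm_nonneg v.1]
    · exact h2
    · exact h3
    · nlinarith [norm_nonneg v.2]
  have eQp : ∀ v : X₁ × X₂, ‖Qp v‖ = ‖v.1‖ := by
    intro v; rw [hQp, Prod.norm_def]; simp
  have eQm : ∀ v : X₁ × X₂, ‖Qm v‖ = ‖v.2‖ := by
    intro v; rw [hQm, Prod.norm_def]; simp
  constructor
  · intro u
    have hp := key (Pp u) (Or.inl (hSPp u))
    have hm := key (Pm u) (Or.inr (hSPm u))
    exact ⟨by rw [eQp]; exact hp.1, by rw [eQm]; exact hp.2,
      by rw [eQp]; exact hm.1, by rw [eQm]; exact hm.2⟩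
  · refine ⟨c + 1, by linarith, ?_⟩
    have lem1 : ∀ w : X₁ × X₂, w.2 = 0 →
        ‖w‖ ≤ (c+1) * ‖Pp w‖ ∧ ‖w‖ ≤ (c+1) * ‖Pm w‖ := by
      intro w hw
      have hp := key (Pp w) (Or.inl (hSPp w))
      have hm := key (Pm w) (Or.inr (hSPm w))
      have h2 : (Pp w).2 = -(Pm w).2 := by
        have := congrArg Prod.snd (hsum w)
        simp only [Prod.snd_add, hw] at this
        linear_combination (norm := module) this
      have hn2 : ‖(Pp w).2‖ = ‖(Pm w).2‖ := by rw [h2, norm_neg]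
      have hw1 : ‖w‖ ≤ ‖Pp w‖ + ‖Pm w‖ := by
        conv_lhs => rw [← hsum w]
        exact norm_add_le _ _
      have hmp : ‖Pm w‖ ≤ c * ‖Pp w‖ := by
        refine hm.2.trans ?_
        rw [← hn2]
        exact mul_le_mul_of_nonneg_left (norm_snd_le _) (le_of_lt hc0)
      have hpm : ‖Pp w‖ ≤ c * ‖Pm w‖ := by
        refine hp.2.trans ?_
        rw [hn2]
        exact mul_le_mul_of_nonneg_left (norm_snd_le _) (le_of_lt hc0)
      constructor <;> nlinarith
    have lem2 : ∀ w : X₁ × X₂, w.1 = 0 →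
        ‖w‖ ≤ (c+1) * ‖Pp w‖ ∧ ‖w‖ ≤ (c+1) * ‖Pm w‖ := by
      intro w hw
      have hp := key (Pp w) (Or.inl (hSPp w))
      have hm := key (Pm w) (Or.inr (hSPm w))
      have h2 : (Pp w).1 = -(Pm w).1 := by
        have := congrArg Prod.fst (hsum w)
        simp only [Prod.fst_add, hw] at this
        linear_combination (norm := module) this
      have hn2 : ‖(Pp w).1‖ = ‖(Pm w).1‖ := by rw [h2, norm_neg]
      have hw1 : ‖w‖ ≤ ‖Pp w‖ + ‖Pm w‖ := by
        conv_lhs => rw [← hsum w]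
        exact norm_add_le _ _
      have hmp : ‖Pm w‖ ≤ c * ‖Pp w‖ := by
        refine hm.1.trans ?_
        rw [← hn2]
        exact mul_le_mul_of_nonneg_left (norm_fst_le _) (le_of_lt hc0)
      have hpm : ‖Pp w‖ ≤ c * ‖Pm w‖ := by
        refine hp.1.trans ?_
        rw [hn2]
        exact mul_le_mul_of_nonneg_left (norm_fst_le _) (le_of_lt hc0)
      constructor <;> nlinarith
    intro u
    have hq2 : (Qp u).2 = 0 := by rw [hQp]
    have hq1 : (Qm u).1 = 0 := by rw [hQm]
    exact ⟨(lem1 _ hq2).1, (lem1 _ hq2).2, (lem2 _ hq1).1, (lem2 _ hq1).2⟩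
end

section
/- Let A be a block linear map on ℂ × ℂⁿ with a ≠ 0. Then for every ξ = (ξ_⊥, ξ_∥) ∈ ℂ × ℂⁿ, the hat transform satisfies Â((Aξ)_⊥, ξ_∥) = (ξ_⊥, (Aξ)_∥), where (Aξ)_⊥ = a ξ_⊥ + b·ξ_∥ and (Aξ)_∥ = ξ_⊥ c + d ξ_∥. Moreover, the map ξ ↦ ((Aξ)_⊥, ξ_∥) is a linear bijection of ℂ^{1+n}. -/
open Matrix

/-- The block linear map `A(ξ_⊥, ξ_∥) = (a ξ_⊥ + b·ξ_∥, ξ_⊥ c + d ξ_∥)`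
on `ℂ × ℂⁿ`. -/
noncomputable def blockMap {n : ℕ} (a : ℂ) (b c : Fin n → ℂ)
    (d : Matrix (Fin n) (Fin n) ℂ) (ξ : ℂ × (Fin n → ℂ)) : ℂ × (Fin n → ℂ) :=
  (a * ξ.1 + b ⬝ᵥ ξ.2, ξ.1 • c + d *ᵥ ξ.2)

/-- The hat transform
`Â(η_⊥, η_∥) = (a⁻¹η_⊥ - a⁻¹ b·η_∥, a⁻¹η_⊥ c + d η_∥ - a⁻¹(b·η_∥) c)`. -/
noncomputable def hatMap {n : ℕ} (a : ℂ) (b c : Fin n → ℂ)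
    (d : Matrix (Fin n) (Fin n) ℂ) (η : ℂ × (Fin n → ℂ)) : ℂ × (Fin n → ℂ) :=
  (a⁻¹ * η.1 - a⁻¹ * (b ⬝ᵥ η.2),
    (a⁻¹ * η.1) • c + d *ᵥ η.2 - (a⁻¹ * (b ⬝ᵥ η.2)) • c)

noncomputable def fstSolve {n : ℕ} (a : ℂ) (b : Fin n → ℂ) (η : ℂ × (Fin n → ℂ)) :
    ℂ × (Fin n → ℂ) :=
  (a⁻¹ * (η.1 - b ⬝ᵥ η.2), η.2)

/-- `Â` first undoes `ξ ↦ ((Aξ)_⊥, ξ_∥)`, then applies `ξ ↦ (ξ_⊥, (Aξ)_∥)`. As an identity this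
needs no `a ≠ 0`: both sides read `0⁻¹` as `0`. -/
theorem hatMap_eq_fstSolve {n : ℕ} (a : ℂ) (b c : Fin n → ℂ) (d : Matrix (Fin n) (Fin n) ℂ)
    (η : ℂ × (Fin n → ℂ)) :
    hatMap a b c d η = ((fstSolve a b η).1, (blockMap a b c d (fstSolve a b η)).2) := by
  simp only [hatMap, blockMap, fstSolve, Prod.mk.injEq]
  constructor
  · ring
  · module

theorem fstSolve_leftInverse {n : ℕ} {a : ℂ} {b c : Fin n → ℂ} {d : Matrix (Fin n) (Fin n) ℂ}
    (ha : a ≠ 0) :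
    Function.LeftInverse (fstSolve a b) (fun ξ => ((blockMap a b c d ξ).1, ξ.2)) := by
  intro ξ
  simp only [blockMap, fstSolve, add_sub_cancel_right, inv_mul_cancel_left₀ ha]

theorem fstSolve_rightInverse {n : ℕ} {a : ℂ} {b c : Fin n → ℂ} {d : Matrix (Fin n) (Fin n) ℂ}
    (ha : a ≠ 0) :
    Function.RightInverse (fstSolve a b) (fun ξ => ((blockMap a b c d ξ).1, ξ.2)) := by
  intro η
  simp only [blockMap, fstSolve, mul_inv_cancel_left₀ ha, sub_add_cancel]

theorem stmt6_general {n : ℕ} (a : ℂ) (b c : Fin n → ℂ)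
    (d : Matrix (Fin n) (Fin n) ℂ) (ha : a ≠ 0) :
    (∀ ξ : ℂ × (Fin n → ℂ),
      hatMap a b c d ((blockMap a b c d ξ).1, ξ.2) = (ξ.1, (blockMap a b c d ξ).2)) ∧
    Function.Bijective (fun ξ : ℂ × (Fin n → ℂ) => ((blockMap a b c d ξ).1, ξ.2)) :=
  ⟨fun ξ => by rw [hatMap_eq_fstSolve, fstSolve_leftInverse ha],
    (fstSolve_leftInverse ha).injective, (fstSolve_rightInverse ha).surjective⟩

theorem stmt6 {n : ℕ} (hn : 1 ≤ n) (a : ℂ) (b c : Fin n → ℂ)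
    (d : Matrix (Fin n) (Fin n) ℂ) (ha : a ≠ 0) :
    (∀ ξ : ℂ × (Fin n → ℂ),
      hatMap a b c d ((blockMap a b c d ξ).1, ξ.2) = (ξ.1, (blockMap a b c d ξ).2)) ∧
    Function.Bijective (fun ξ : ℂ × (Fin n → ℂ) => ((blockMap a b c d ξ).1, ξ.2)) :=
  stmt6_general a b c d ha
end

section
/- Let A be a block linear map on ℂ × ℂⁿ and λ > 0 such that Re⟨Aξ, ξ⟩ ≥ λ‖ξ‖² for all ξ ∈ ℂ^{1+n} (strict accretivity). Then Re a ≥ λ, so a ≠ 0 and the hat transform Â is defined, and Â is strictly accretive with constant λ/(1 + ‖A‖²): Re⟨Âη, η⟩ ≥ (λ/(1 + ‖A‖²)) ‖η‖² for all η ∈ ℂ^{1+n}, where ‖A‖ denotes the operator norm of A. -/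
open Matrix

/-- The Hermitian inner product `⟨ξ, ζ⟩ = Σ_i ξ_i conj(ζ_i)` on `ℂ × ℂⁿ`
(conjugate-linear in the second variable). -/
noncomputable def herm {n : ℕ} (ξ ζ : ℂ × (Fin n → ℂ)) : ℂ :=
  ξ.1 * (starRingEnd ℂ) ζ.1 + ∑ j, ξ.2 j * (starRingEnd ℂ) (ζ.2 j)

/-- The squared Euclidean norm `‖ξ‖² = Σ_i |ξ_i|²` on `ℂ × ℂⁿ`. -/
noncomputable def sqnorm {n : ℕ} (ξ : ℂ × (Fin n → ℂ)) : ℝ :=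
  ‖ξ.1‖ ^ 2 + ∑ j, ‖ξ.2 j‖ ^ 2

/-!
`Â` is the pivot transform of `A` in its first coordinate: if `ξ = (a⁻¹ (η_⊥ - b·η_∥), η_∥)`,
then `Aξ = (η_⊥, ζ_∥)` and `Âη = (ξ_⊥, ζ_∥)`. Hence `⟨Âη, η⟩` and `⟨Aξ, ξ⟩` differ only in
that their first terms are complex conjugates, so they have the same real part, while
`‖η‖² ≤ ‖Aξ‖² + ‖ξ‖² ≤ (1 + ‖A‖²) ‖ξ‖²`. Accretivity of `A` at `ξ` then gives that of `Â` at `η`.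
-/

/-- The vector `ξ` with `ξ_∥ = η_∥` and `(Aξ)_⊥ = η_⊥`. -/
noncomputable def pivotVector {n : ℕ} (a : ℂ) (b : Fin n → ℂ) (η : ℂ × (Fin n → ℂ)) :
    ℂ × (Fin n → ℂ) :=
  (a⁻¹ * (η.1 - b ⬝ᵥ η.2), η.2)

section Herm

variable {n : ℕ}

theorem re_herm_swap_fst (x y : ℂ × (Fin n → ℂ)) :
    (herm (y.1, x.2) (x.1, y.2)).re = (herm x y).re := by
  simp only [herm, Complex.add_re, Complex.mul_re, Complex.conj_re, Complex.conj_im]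
  ring

theorem sqnorm_mk_le (x y : ℂ × (Fin n → ℂ)) : sqnorm (x.1, y.2) ≤ sqnorm x + sqnorm y := by
  have hx : 0 ≤ ∑ j, ‖x.2 j‖ ^ 2 := Finset.sum_nonneg fun _ _ => sq_nonneg _
  have hy : 0 ≤ ‖y.1‖ ^ 2 := sq_nonneg _
  simp only [sqnorm] at *
  linarith

theorem re_herm_blockMap_inl (a : ℂ) (b c : Fin n → ℂ) (d : Matrix (Fin n) (Fin n) ℂ) :
    (herm (blockMap a b c d (1, 0)) (1, 0)).re = a.re := by
  simp [herm, blockMap]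

theorem sqnorm_inl : sqnorm ((1, 0) : ℂ × (Fin n → ℂ)) = 1 := by
  simp [sqnorm]

end Herm

section Pivot

variable {n : ℕ} {a : ℂ} (b c : Fin n → ℂ) (d : Matrix (Fin n) (Fin n) ℂ)
  (η : ℂ × (Fin n → ℂ))

theorem eq_blockMap_pivotVector_fst (ha : a ≠ 0) :
    η = ((blockMap a b c d (pivotVector a b η)).1, (pivotVector a b η).2) := by
  ext
  · simp only [blockMap, pivotVector]
    field_simp
    ring
  · rfl

theorem hatMap_eq_pivot :
    hatMap a b c d η = ((pivotVector a b η).1, (blockMap a b c d (pivotVector a b η)).2) := by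
  ext j
  · simp only [hatMap, pivotVector]
    ring
  · simp only [hatMap, blockMap, pivotVector, Pi.add_apply, Pi.sub_apply, Pi.smul_apply,
      smul_eq_mul]
    ring

theorem re_herm_hatMap (ha : a ≠ 0) :
    (herm (hatMap a b c d η) η).re =
      (herm (blockMap a b c d (pivotVector a b η)) (pivotVector a b η)).re := by
  have h := re_herm_swap_fst (blockMap a b c d (pivotVector a b η)) (pivotVector a b η)
  rwa [← eq_blockMap_pivotVector_fst b c d η ha, ← hatMap_eq_pivot] at h

end Pivot

/- The operator norm `‖A‖` is encoded by any `Λ` with `‖Aξ‖² ≤ Λ²‖ξ‖²` for every `ξ`. -/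
theorem stmt7_general {n : ℕ} (a : ℂ) (b c : Fin n → ℂ)
    (d : Matrix (Fin n) (Fin n) ℂ) (lam Lam : ℝ) (hlam : 0 < lam)
    (hacc : ∀ ξ : ℂ × (Fin n → ℂ), lam * sqnorm ξ ≤ (herm (blockMap a b c d ξ) ξ).re)
    (hbound : ∀ ξ : ℂ × (Fin n → ℂ), sqnorm (blockMap a b c d ξ) ≤ Lam ^ 2 * sqnorm ξ) :
    lam ≤ a.re ∧ a ≠ 0 ∧
      ∀ η : ℂ × (Fin n → ℂ),
        (lam / (1 + Lam ^ 2)) * sqnorm η ≤ (herm (hatMap a b c d η) η).re := by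
  have ha : lam ≤ a.re := by
    simpa [sqnorm_inl, re_herm_blockMap_inl] using hacc (1, 0)
  have ha0 : a ≠ 0 := fun h => by rw [h, Complex.zero_re] at ha; linarith
  refine ⟨ha, ha0, fun η => ?_⟩
  set ξ := pivotVector a b η
  have hnorm : sqnorm η ≤ (1 + Lam ^ 2) * sqnorm ξ := by
    rw [eq_blockMap_pivotVector_fst b c d η ha0]
    linarith [sqnorm_mk_le (blockMap a b c d ξ) ξ, hbound ξ]
  calc lam / (1 + Lam ^ 2) * sqnorm η
      ≤ lam / (1 + Lam ^ 2) * ((1 + Lam ^ 2) * sqnorm ξ) := by gcongr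
    _ = lam * sqnorm ξ := by field_simp
    _ ≤ (herm (blockMap a b c d ξ) ξ).re := hacc ξ
    _ = (herm (hatMap a b c d η) η).re := (re_herm_hatMap b c d η ha0).symm

theorem stmt7 {n : ℕ} (hn : 1 ≤ n) (a : ℂ) (b c : Fin n → ℂ)
    (d : Matrix (Fin n) (Fin n) ℂ) (lam Lam : ℝ) (hlam : 0 < lam) (hLam : 0 ≤ Lam)
    (hacc : ∀ ξ : ℂ × (Fin n → ℂ), lam * sqnorm ξ ≤ (herm (blockMap a b c d ξ) ξ).re)
    (hbound : ∀ ξ : ℂ × (Fin n → ℂ), sqnorm (blockMap a b c d ξ) ≤ Lam ^ 2 * sqnorm ξ) :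
    lam ≤ a.re ∧ a ≠ 0 ∧
      ∀ η : ℂ × (Fin n → ℂ),
        (lam / (1 + Lam ^ 2)) * sqnorm η ≤ (herm (hatMap a b c d η) η).re :=
  stmt7_general a b c d lam Lam hlam hacc hbound
end
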